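/- arXiv:2009.07450 — 2 statements merged into one kernel-verified Lean document; each statement's English description precedes it below -/
import Mathlib

section
/- Let ψ, φ be orthogonal unit vectors in H = ℂ² ⊗ H', and let A be a unitary on H. Write A ψ = √p |1⟩ψ₁ + √(1−p) |0⟩ψ₀ and A φ = √(1−p+Δ) |0⟩φ₀ + √(p−Δ) |1⟩φ₁ where ψ₀, ψ₁, φ₀, φ₁ are unit vectors in H', 0 ≤ Δ ≤ p ≤ 1, and 1−p+Δ ≤ 1. Define x = (ψ+φ)/√2, y = (ψ−φ)/√2 and U = A† Z₁ A where Z₁ = Z ⊗ I. Then |⟨y, U x⟩ + ⟨x, U y⟩| / 2 = Δ. -/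
open scoped InnerProductSpace

noncomputable section

/-- The elementary tensor of a qubit state with a state of `ℂ^N`, inside
`ℂ² ⊗ ℂ^N ≅ EuclideanSpace ℂ (Fin 2 × Fin N)`. -/
def tensor {N : ℕ} (a : EuclideanSpace ℂ (Fin 2)) (b : EuclideanSpace ℂ (Fin N)) :
    EuclideanSpace ℂ (Fin 2 × Fin N) :=
  WithLp.toLp 2 (fun p => a p.1 * b p.2)

/-- The qubit basis state `|0⟩`. -/
def ket0 : EuclideanSpace ℂ (Fin 2) := EuclideanSpace.single 0 1

/-- The qubit basis state `|1⟩`. -/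
def ket1 : EuclideanSpace ℂ (Fin 2) := EuclideanSpace.single 1 1

/-- Pauli `Z` on the first qubit: `Z ⊗ I`. -/
def Z1 {N : ℕ} (v : EuclideanSpace ℂ (Fin 2 × Fin N)) :
    EuclideanSpace ℂ (Fin 2 × Fin N) :=
  WithLp.toLp 2 (fun p => (if p.1 = 0 then (1 : ℂ) else -1) * v p)


/-!
Transport through `A`: `⟪v, U w⟫ = ⟪A v, Z₁ (A w)⟫`. For any linear `T`, the cross terms
`⟪ψ, T φ⟫` and `⟪φ, T ψ⟫` cancel in `⟪y, T x⟫ + ⟪x, T y⟫`, which leaves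
`⟪ψ, T ψ⟫ - ⟪φ, T φ⟫`. The `Z₁`-expectation of `√s |1⟩u + √t |0⟩v` with unit `u, v` is `t - s`,
so this difference is `(1 - 2p) - (1 - 2p + 2Δ) = -2Δ`.
-/

lemma Z1_tensor_ket0 {N : ℕ} (v : EuclideanSpace ℂ (Fin N)) :
    Z1 (tensor ket0 v) = tensor ket0 v := by
  ext ⟨i, j⟩
  fin_cases i <;> simp [Z1, tensor, ket0]

lemma Z1_tensor_ket1 {N : ℕ} (v : EuclideanSpace ℂ (Fin N)) :
    Z1 (tensor ket1 v) = -tensor ket1 v := by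
  ext ⟨i, j⟩
  fin_cases i <;> simp [Z1, tensor, ket1]

def Z1ₗ (N : ℕ) : EuclideanSpace ℂ (Fin 2 × Fin N) →ₗ[ℂ] EuclideanSpace ℂ (Fin 2 × Fin N) where
  toFun := Z1
  map_add' u v := by ext q; simp only [Z1, PiLp.add_apply]; ring
  map_smul' c v := by ext q; simp only [Z1, PiLp.smul_apply, smul_eq_mul, RingHom.id_apply]; ring

@[simp]
lemma Z1ₗ_apply {N : ℕ} (v : EuclideanSpace ℂ (Fin 2 × Fin N)) : Z1ₗ N v = Z1 v := rfl

lemma inner_tensor {N : ℕ} (a b : EuclideanSpace ℂ (Fin 2)) (u v : EuclideanSpace ℂ (Fin N)) :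
    ⟪tensor a u, tensor b v⟫_ℂ = ⟪a, b⟫_ℂ * ⟪u, v⟫_ℂ := by
  simp only [PiLp.inner_apply, RCLike.inner_apply, tensor, Fintype.sum_prod_type,
    Finset.sum_mul_sum, map_mul]
  exact Finset.sum_congr rfl fun _ _ => Finset.sum_congr rfl fun _ _ => by ring

lemma inner_ket0_ket1 : ⟪ket0, ket1⟫_ℂ = 0 := by
  simp [ket0, ket1, EuclideanSpace.inner_single_left]

lemma inner_ket1_ket0 : ⟪ket1, ket0⟫_ℂ = 0 := by
  simp [ket0, ket1, EuclideanSpace.inner_single_left]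

lemma inner_ket0_self : ⟪ket0, ket0⟫_ℂ = 1 := by
  simp [ket0]

lemma inner_ket1_self : ⟪ket1, ket1⟫_ℂ = 1 := by
  simp [ket1]

lemma inner_Z1_ket1_add_ket0 {N : ℕ} (s t : ℝ) (u v : EuclideanSpace ℂ (Fin N)) :
    ⟪(s : ℂ) • tensor ket1 u + (t : ℂ) • tensor ket0 v,
      Z1 ((s : ℂ) • tensor ket1 u + (t : ℂ) • tensor ket0 v)⟫_ℂ =
      ((t ^ 2 * ‖v‖ ^ 2 - s ^ 2 * ‖u‖ ^ 2 : ℝ) : ℂ) := by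
  rw [← Z1ₗ_apply, map_add, map_smul, map_smul, Z1ₗ_apply, Z1ₗ_apply, Z1_tensor_ket0,
    Z1_tensor_ket1]
  simp only [inner_add_left, inner_add_right, inner_smul_left, inner_smul_right, inner_neg_right,
    inner_tensor, inner_ket0_ket1, inner_ket1_ket0, inner_ket0_self, inner_ket1_self,
    Complex.conj_ofReal]
  simp only [inner_self_eq_norm_sq_to_K, RCLike.ofReal_eq_complex_ofReal]
  push_cast
  ring

lemma inner_smul_sub_map_smul_add_add {𝕜 E : Type*} [RCLike 𝕜] [NormedAddCommGroup E]
    [InnerProductSpace 𝕜 E] (T : E →ₗ[𝕜] E) (c : 𝕜) (a b : E) :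
    ⟪c • (a - b), T (c • (a + b))⟫_𝕜 + ⟪c • (a + b), T (c • (a - b))⟫_𝕜 =
      2 * ‖c‖ ^ 2 * (⟪a, T a⟫_𝕜 - ⟪b, T b⟫_𝕜) := by
  simp only [map_smul, map_add, map_sub, inner_smul_left, inner_smul_right, inner_add_left,
    inner_add_right, inner_sub_left, inner_sub_right, ← RCLike.mul_conj]
  ring

theorem approx_distinguisher_gives_approx_swap_general {N : ℕ}
    (ψ φ : EuclideanSpace ℂ (Fin 2 × Fin N))
    (A : EuclideanSpace ℂ (Fin 2 × Fin N) ≃ₗᵢ[ℂ] EuclideanSpace ℂ (Fin 2 × Fin N))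
    (p Δ : ℝ) (hΔ0 : 0 ≤ Δ) (hΔp : Δ ≤ p) (hp1 : p ≤ 1)
    (ψ0 ψ1 φ0 φ1 : EuclideanSpace ℂ (Fin N))
    (hψ0 : ‖ψ0‖ = 1) (hψ1 : ‖ψ1‖ = 1) (hφ0 : ‖φ0‖ = 1) (hφ1 : ‖φ1‖ = 1)
    (hAψ : A ψ = (Real.sqrt p : ℂ) • tensor ket1 ψ1
                  + (Real.sqrt (1 - p) : ℂ) • tensor ket0 ψ0)
    (hAφ : A φ = (Real.sqrt (1 - p + Δ) : ℂ) • tensor ket0 φ0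
                  + (Real.sqrt (p - Δ) : ℂ) • tensor ket1 φ1)
    (x y : EuclideanSpace ℂ (Fin 2 × Fin N))
    (hx : x = ((Real.sqrt 2 : ℂ))⁻¹ • (ψ + φ))
    (hy : y = ((Real.sqrt 2 : ℂ))⁻¹ • (ψ - φ))
    (U : EuclideanSpace ℂ (Fin 2 × Fin N) → EuclideanSpace ℂ (Fin 2 × Fin N))
    (hU : U = fun v => A.symm (Z1 (A v))) :
    ‖⟪y, U x⟫_ℂ + ⟪x, U y⟫_ℂ‖ / 2 = Δ := by
  subst hx hy hU
  have hp0 : 0 ≤ p := hΔ0.trans hΔp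
  have hψZ : ⟪A ψ, Z1 (A ψ)⟫_ℂ = ((1 - 2 * p : ℝ) : ℂ) := by
    rw [hAψ, inner_Z1_ket1_add_ket0, hψ0, hψ1, Real.sq_sqrt hp0, Real.sq_sqrt (by linarith)]
    congr 1; ring
  have hφZ : ⟪A φ, Z1 (A φ)⟫_ℂ = ((1 - 2 * p + 2 * Δ : ℝ) : ℂ) := by
    rw [hAφ, add_comm, inner_Z1_ket1_add_ket0, hφ0, hφ1, Real.sq_sqrt (by linarith),
      Real.sq_sqrt (by linarith)]
    congr 1; ring
  have hnorm : (2 : ℂ) * (‖((Real.sqrt 2 : ℂ))⁻¹‖ : ℂ) ^ 2 = 1 := by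
    rw [norm_inv, Complex.norm_real, Real.norm_of_nonneg (Real.sqrt_nonneg 2), Complex.ofReal_inv,
      inv_pow, ← Complex.ofReal_pow, Real.sq_sqrt zero_le_two]
    norm_num
  have hswap := inner_smul_sub_map_smul_add_add
    (A.symm.toLinearMap ∘ₗ Z1ₗ N ∘ₗ A.toLinearMap) ((Real.sqrt 2 : ℂ))⁻¹ ψ φ
  simp only [LinearMap.comp_apply, Z1ₗ_apply, LinearEquiv.coe_coe,
    LinearIsometryEquiv.coe_toLinearEquiv, ← A.inner_map_eq_flip, hψZ, hφZ,
    RCLike.ofReal_eq_complex_ofReal] at hswap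
  beta_reduce
  rw [← A.inner_map_eq_flip, ← A.inner_map_eq_flip, hswap, hnorm, one_mul, ← Complex.ofReal_sub,
    Complex.norm_real, Real.norm_eq_abs, abs_of_nonpos (by linarith)]
  ring

/-- If a unitary `A` distinguishes the orthogonal unit vectors `ψ, φ` with
bias `Δ` (accepting `ψ` with probability `p` and `φ` with probability `p - Δ`, where
"accepting" means measuring `|1⟩` on the first qubit), then `U = A† Z₁ A` satisfies
`|⟨y, U x⟩ + ⟨x, U y⟩| / 2 = Δ` for `x = (ψ+φ)/√2`, `y = (ψ-φ)/√2`. -/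
theorem approx_distinguisher_gives_approx_swap {N : ℕ}
    (ψ φ : EuclideanSpace ℂ (Fin 2 × Fin N))
    (hψ : ‖ψ‖ = 1) (hφ : ‖φ‖ = 1) (hψφ : ⟪ψ, φ⟫_ℂ = 0)
    (A : EuclideanSpace ℂ (Fin 2 × Fin N) ≃ₗᵢ[ℂ] EuclideanSpace ℂ (Fin 2 × Fin N))
    (p Δ : ℝ) (hΔ0 : 0 ≤ Δ) (hΔp : Δ ≤ p) (hp1 : p ≤ 1) (hpΔ : 1 - p + Δ ≤ 1)
    (ψ0 ψ1 φ0 φ1 : EuclideanSpace ℂ (Fin N))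
    (hψ0 : ‖ψ0‖ = 1) (hψ1 : ‖ψ1‖ = 1) (hφ0 : ‖φ0‖ = 1) (hφ1 : ‖φ1‖ = 1)
    (hAψ : A ψ = (Real.sqrt p : ℂ) • tensor ket1 ψ1
                  + (Real.sqrt (1 - p) : ℂ) • tensor ket0 ψ0)
    (hAφ : A φ = (Real.sqrt (1 - p + Δ) : ℂ) • tensor ket0 φ0
                  + (Real.sqrt (p - Δ) : ℂ) • tensor ket1 φ1)
    (x y : EuclideanSpace ℂ (Fin 2 × Fin N))
    (hx : x = ((Real.sqrt 2 : ℂ))⁻¹ • (ψ + φ))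
    (hy : y = ((Real.sqrt 2 : ℂ))⁻¹ • (ψ - φ))
    (U : EuclideanSpace ℂ (Fin 2 × Fin N) → EuclideanSpace ℂ (Fin 2 × Fin N))
    (hU : U = fun v => A.symm (Z1 (A v))) :
    ‖⟪y, U x⟫_ℂ + ⟪x, U y⟫_ℂ‖ / 2 = Δ :=
  approx_distinguisher_gives_approx_swap_general ψ φ A p Δ hΔ0 hΔp hp1 ψ0 ψ1 φ0 φ1 hψ0 hψ1 hφ0 hφ1
    hAψ hAφ x y hx hy U hU

end
end

section
/- If a unitary C satisfies |⟨x, C y⟩ + ⟨y, C x⟩|/2 ≥ 1 − ε for orthogonal unit vectors x, y, then |⟨y, C x⟩|² ≥ (1 − 2ε)², i.e., C approximately maps x to y. In particular, swap complexity dominates relative complexity: any circuit achieving swap error ε achieves mapping fidelity at least (1 − 2ε)². -/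
/-! By Cauchy–Schwarz `‖⟪x, C y⟫‖ ≤ 1`, so the triangle inequality turns the swap bound
`2 (1 - ε) ≤ ‖⟪x, C y⟫ + ⟪y, C x⟫‖` into `1 - 2 ε ≤ ‖⟪y, C x⟫‖`; square both sides. -/

open scoped InnerProductSpace

theorem norm_inner_map_le_one {𝕜 E F : Type*} [RCLike 𝕜] [NormedAddCommGroup E]
    [InnerProductSpace 𝕜 E] [NormedAddCommGroup F] [InnerProductSpace 𝕜 F]
    (C : F →ₗᵢ[𝕜] E) {x : E} {y : F} (hx : ‖x‖ ≤ 1) (hy : ‖y‖ ≤ 1) :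
    ‖⟪x, C y⟫_𝕜‖ ≤ 1 :=
  calc ‖⟪x, C y⟫_𝕜‖ ≤ ‖x‖ * ‖C y‖ := norm_inner_le_norm x (C y)
    _ ≤ 1 := by rw [C.norm_map]; exact mul_le_one₀ hx (norm_nonneg y) hy

theorem swap_dominates_map_general
    {H : Type*} [NormedAddCommGroup H] [InnerProductSpace ℂ H]
    (x y : H) (hx : ‖x‖ = 1) (hy : ‖y‖ = 1)
    (C : H ≃ₗᵢ[ℂ] H) (ε : ℝ) (hε : ε ≤ 1 / 2)
    (hswap : 1 - ε ≤ ‖⟪x, C y⟫_ℂ + ⟪y, C x⟫_ℂ‖ / 2) :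
    (1 - 2 * ε) ^ 2 ≤ ‖⟪y, C x⟫_ℂ‖ ^ 2 := by
  have hxCy : ‖⟪x, C y⟫_ℂ‖ ≤ 1 := norm_inner_map_le_one C.toLinearIsometry hx.le hy.le
  have hmap : 1 - 2 * ε ≤ ‖⟪y, C x⟫_ℂ‖ := by
    linarith [norm_add_le ⟪x, C y⟫_ℂ ⟪y, C x⟫_ℂ]
  exact pow_le_pow_left₀ (by linarith) hmap 2

/-- If a unitary `C` achieves swap error `ε ≤ 1/2` on the orthogonal unit
vectors `x, y`, i.e. `|⟨x, C y⟩ + ⟨y, C x⟩| / 2 ≥ 1 - ε`, then `C` approximately maps `x`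
to `y`: `|⟨y, C x⟩|² ≥ (1 - 2ε)²`. Hence swap complexity dominates relative complexity. -/
theorem swap_dominates_map
    {H : Type*} [NormedAddCommGroup H] [InnerProductSpace ℂ H]
    (x y : H) (hx : ‖x‖ = 1) (hy : ‖y‖ = 1) (hxy : ⟪x, y⟫_ℂ = 0)
    (C : H ≃ₗᵢ[ℂ] H) (ε : ℝ) (hε0 : 0 ≤ ε) (hε : ε ≤ 1 / 2)
    (hswap : 1 - ε ≤ ‖⟪x, C y⟫_ℂ + ⟪y, C x⟫_ℂ‖ / 2) :
    (1 - 2 * ε) ^ 2 ≤ ‖⟪y, C x⟫_ℂ‖ ^ 2 :=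
  swap_dominates_map_general x y hx hy C ε hε hswap
end
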